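/- Let M, N, P be monoidal categories, let D be an (M,P)-biactegory (left M-action •_D, right P-action ∘_D, bimodulator ζ^D), and let E be an (N,P)-biactegory (left N-action •_E, right P-action ∘_E, bimodulator ζ^E). Let [D,E]_P be the category whose objects are strong right P-linear functors (F, r) : D → E and whose morphisms are P-linear transformations. Then [D,E]_P is an (N,M)-biactegory: the left N-action sends (n, (F, r)) to the functor d ↦ n •_E F d, with right P-lineator (n •_E F d) ∘_E p ≅ n •_E (F d ∘_E p) ≅ n •_E F (d ∘_D p) obtained from (ζ^E)⁻¹ and r; the right M-action sends ((F, r), m) to the functor d ↦ F (m •_D d), with right P-lineator F(m •_D d) ∘_E p ≅ F ((m •_D d) ∘_D p) ≅ F (m •_D (d ∘_D p)) obtained from r and F((ζ^D)⁻¹); the unitors and multiplicators of these actions are given pointwise by those of E and D respectively; and the bimodulator for [D,E]_P is given pointwise by identities n •_E F(m •_D d) = n •_E F(m •_D d). All the right P-linearity conditions, actegory coherences, linearity of the structure transformations, and the four biactegory coherences hold for these data. -/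

import Mathlib

open CategoryTheory Category MonoidalCategory

universe v₁ v₂ v₃ u₁ u₂ u₃

variable (M : Type u₁) [Category.{v₁} M] [MonoidalCategory M]
variable (C : Type u₂) [Category.{v₂} C]

/-- The data of a left actegory. -/
structure LeftActegoryData where
  actObj : M → C → C
  actHom : ∀ {m n : M} {c d : C}, (m ⟶ n) → (c ⟶ d) → (actObj m c ⟶ actObj n d)
  η : ∀ c : C, c ⟶ actObj (𝟙_ M) c
  η' : ∀ c : C, actObj (𝟙_ M) c ⟶ c
  μ : ∀ (m n : M) (c : C), actObj m (actObj n c) ⟶ actObj (m ⊗ n) c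
  μ' : ∀ (m n : M) (c : C), actObj (m ⊗ n) c ⟶ actObj m (actObj n c)

variable {M C}

/-- The laws of a left actegory. -/
structure IsLeftActegory (A : LeftActegoryData M C) : Prop where
  actHom_id : ∀ (m : M) (c : C), A.actHom (𝟙 m) (𝟙 c) = 𝟙 (A.actObj m c)
  actHom_comp : ∀ {m n p : M} {c d e : C} (g : m ⟶ n) (g' : n ⟶ p) (f : c ⟶ d) (f' : d ⟶ e),
      A.actHom (g ≫ g') (f ≫ f') = A.actHom g f ≫ A.actHom g' f'
  η_iso : ∀ c, A.η c ≫ A.η' c = 𝟙 c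
  η'_iso : ∀ c, A.η' c ≫ A.η c = 𝟙 _
  μ_iso : ∀ m n c, A.μ m n c ≫ A.μ' m n c = 𝟙 _
  μ'_iso : ∀ m n c, A.μ' m n c ≫ A.μ m n c = 𝟙 _
  η_nat : ∀ {c d : C} (f : c ⟶ d), f ≫ A.η d = A.η c ≫ A.actHom (𝟙 (𝟙_ M)) f
  μ_nat : ∀ {m m' n n' : M} {c c' : C} (g : m ⟶ m') (h : n ⟶ n') (f : c ⟶ c'),
      A.actHom g (A.actHom h f) ≫ A.μ m' n' c' = A.μ m n c ≫ A.actHom (g ⊗ₘ h) f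
  pentagon : ∀ (m n p : M) (c : C),
      A.μ m n (A.actObj p c) ≫ A.μ (m ⊗ n) p c ≫ A.actHom (α_ m n p).hom (𝟙 c)
        = A.actHom (𝟙 m) (A.μ n p c) ≫ A.μ m (n ⊗ p) c
  triangle_left : ∀ (m : M) (c : C),
      A.η (A.actObj m c) ≫ A.μ (𝟙_ M) m c = A.actHom (λ_ m).inv (𝟙 c)
  triangle_right : ∀ (m : M) (c : C),
      A.actHom (𝟙 m) (A.η c) ≫ A.μ m (𝟙_ M) c = A.actHom (ρ_ m).inv (𝟙 c)


variable (N : Type u₃) [Category.{v₃} N] [MonoidalCategory N]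

variable (C) in
/-- The data of a right actegory: an action `∘ : C × N ⥤ C` together with a
unitor `c ≅ c ∘ i`, a multiplicator `(c ∘ n) ∘ m ≅ c ∘ (n ⊗ m)` and their
(candidate) inverses. -/
structure RightActegoryData where
  actObj : C → N → C
  actHom : ∀ {c d : C} {n n' : N}, (c ⟶ d) → (n ⟶ n') → (actObj c n ⟶ actObj d n')
  η : ∀ c : C, c ⟶ actObj c (𝟙_ N)
  η' : ∀ c : C, actObj c (𝟙_ N) ⟶ c
  μ : ∀ (c : C) (n m : N), actObj (actObj c n) m ⟶ actObj c (n ⊗ m)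
  μ' : ∀ (c : C) (n m : N), actObj c (n ⊗ m) ⟶ actObj (actObj c n) m

variable {N}

/-- The laws of a right actegory (i.e. the coherences making it a left actegory
over the monoidal opposite). -/
structure IsRightActegory (R : RightActegoryData C N) : Prop where
  actHom_id : ∀ (c : C) (n : N), R.actHom (𝟙 c) (𝟙 n) = 𝟙 (R.actObj c n)
  actHom_comp : ∀ {c d e : C} {n p q : N} (f : c ⟶ d) (f' : d ⟶ e) (h : n ⟶ p) (h' : p ⟶ q),
      R.actHom (f ≫ f') (h ≫ h') = R.actHom f h ≫ R.actHom f' h'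
  η_iso : ∀ c, R.η c ≫ R.η' c = 𝟙 c
  η'_iso : ∀ c, R.η' c ≫ R.η c = 𝟙 _
  μ_iso : ∀ c n m, R.μ c n m ≫ R.μ' c n m = 𝟙 _
  μ'_iso : ∀ c n m, R.μ' c n m ≫ R.μ c n m = 𝟙 _
  η_nat : ∀ {c d : C} (f : c ⟶ d), f ≫ R.η d = R.η c ≫ R.actHom f (𝟙 (𝟙_ N))
  μ_nat : ∀ {c c' : C} {n n' m m' : N} (f : c ⟶ c') (h : n ⟶ n') (k : m ⟶ m'),
      R.actHom (R.actHom f h) k ≫ R.μ c' n' m' = R.μ c n m ≫ R.actHom f (h ⊗ₘ k)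
  pentagon : ∀ (c : C) (p n m : N),
      R.μ (R.actObj c p) n m ≫ R.μ c p (n ⊗ m) ≫ R.actHom (𝟙 c) (α_ p n m).inv
        = R.actHom (R.μ c p n) (𝟙 m) ≫ R.μ c (p ⊗ n) m
  triangle_left : ∀ (c : C) (m : N),
      R.η (R.actObj c m) ≫ R.μ c m (𝟙_ N) = R.actHom (𝟙 c) (ρ_ m).inv
  triangle_right : ∀ (c : C) (m : N),
      R.actHom (R.η c) (𝟙 m) ≫ R.μ c (𝟙_ N) m = R.actHom (𝟙 c) (λ_ m).inv

/-- The data of a bimodulator relating a left `M`-action and a right `N`-action on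
the same category: a natural isomorphism `ζ : m • (c ∘ n) ≅ (m • c) ∘ n`. -/
structure BimodulatorData (A : LeftActegoryData M C) (R : RightActegoryData C N) where
  ζ : ∀ (m : M) (c : C) (n : N), A.actObj m (R.actObj c n) ⟶ R.actObj (A.actObj m c) n
  ζ' : ∀ (m : M) (c : C) (n : N), R.actObj (A.actObj m c) n ⟶ A.actObj m (R.actObj c n)

/-- The laws of a biactegory: the bimodulator is a natural isomorphism satisfying
the two pentagon and the two triangle coherence laws relating it to the
structure of the two actions. -/
structure IsBiactegory {A : LeftActegoryData M C} {R : RightActegoryData C N}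
    (Z : BimodulatorData A R) : Prop where
  ζ_iso : ∀ m c n, Z.ζ m c n ≫ Z.ζ' m c n = 𝟙 _
  ζ'_iso : ∀ m c n, Z.ζ' m c n ≫ Z.ζ m c n = 𝟙 _
  ζ_nat : ∀ {m m' : M} {c c' : C} {n n' : N} (g : m ⟶ m') (f : c ⟶ c') (h : n ⟶ n'),
      A.actHom g (R.actHom f h) ≫ Z.ζ m' c' n' = Z.ζ m c n ≫ R.actHom (A.actHom g f) h
  pentagon_left : ∀ (m n : M) (c : C) (p : N),
      A.μ m n (R.actObj c p) ≫ Z.ζ (m ⊗ n) c p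
        = A.actHom (𝟙 m) (Z.ζ n c p) ≫ Z.ζ m (A.actObj n c) p ≫ R.actHom (A.μ m n c) (𝟙 p)
  pentagon_right : ∀ (p : M) (c : C) (m n : N),
      A.actHom (𝟙 p) (R.μ c m n) ≫ Z.ζ p c (m ⊗ n)
        = Z.ζ p (R.actObj c m) n ≫ R.actHom (Z.ζ p c m) (𝟙 n) ≫ R.μ (A.actObj p c) m n
  triangle_unit_left : ∀ (c : C) (m : N),
      A.η (R.actObj c m) ≫ Z.ζ (𝟙_ M) c m = R.actHom (A.η c) (𝟙 m)
  triangle_unit_right : ∀ (m : M) (c : C),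
      A.actHom (𝟙 m) (R.η c) ≫ Z.ζ m c (𝟙_ N) = R.η (A.actObj m c)

universe v₄ v₅ u₄ u₅

variable {P : Type u₄} [Category.{v₄} P] [MonoidalCategory P]
variable {D : Type u₅} [Category.{v₅} D]

section PLinCat

/-- A strong right `P`-linear functor from the right `P`-actegory `(C, ∘_D)` to the
right `P`-actegory `(D, ∘_E)`: a functor together with an invertible lineator
satisfying the right-linearity laws. -/
structure PLin (RD : RightActegoryData C P) (RE : RightActegoryData D P)
    (hRE : IsRightActegory RE) where
  F : C ⥤ D
  r : ∀ (d : C) (p : P), RE.actObj (F.obj d) p ⟶ F.obj (RD.actObj d p)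
  r' : ∀ (d : C) (p : P), F.obj (RD.actObj d p) ⟶ RE.actObj (F.obj d) p
  r_iso : ∀ d p, r d p ≫ r' d p = 𝟙 _
  r'_iso : ∀ d p, r' d p ≫ r d p = 𝟙 _
  r_nat : ∀ {d d' : C} {p p' : P} (f : d ⟶ d') (h : p ⟶ p'),
      RE.actHom (F.map f) h ≫ r d' p' = r d p ≫ F.map (RD.actHom f h)
  r_unit : ∀ d : C, RE.η (F.obj d) ≫ r d (𝟙_ P) = F.map (RD.η d)
  r_mult : ∀ (d : C) (p q : P),
      RE.μ (F.obj d) p q ≫ r d (p ⊗ q)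
        = RE.actHom (r d p) (𝟙 q) ≫ r (RD.actObj d p) q ≫ F.map (RD.μ d p q)

variable {RD : RightActegoryData C P} {RE : RightActegoryData D P}
  {hRE : IsRightActegory RE}

/-- A `P`-linear transformation between strong right `P`-linear functors. -/
@[ext]
structure PLinHom (K K' : PLin RD RE hRE) where
  t : K.F ⟶ K'.F
  linearity : ∀ (d : C) (p : P),
      RE.actHom (t.app d) (𝟙 p) ≫ K'.r d p = K.r d p ≫ t.app (RD.actObj d p)

/-- The category `[C, D]_P` of strong right `P`-linear functors and `P`-linear
transformations. -/
instance : Category (PLin RD RE hRE) where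
  Hom := PLinHom
  id K :=
    { t := 𝟙 K.F
      linearity := fun d p => by simp [hRE.actHom_id] }
  comp {K₁ K₂ K₃} f g :=
    { t := f.t ≫ g.t
      linearity := fun d p => by
        have h : RE.actHom (f.t.app d ≫ g.t.app d) (𝟙 p)
            = RE.actHom (f.t.app d) (𝟙 p) ≫ RE.actHom (g.t.app d) (𝟙 p) := by
          rw [← hRE.actHom_comp]; simp
        simp only [NatTrans.comp_app, h, Category.assoc, g.linearity]
        rw [← Category.assoc, f.linearity, Category.assoc] }
  id_comp f := by
    apply PLinHom.ext
    show 𝟙 _ ≫ f.t = f.t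
    simp
  comp_id f := by
    apply PLinHom.ext
    show f.t ≫ 𝟙 _ = f.t
    simp
  assoc f g h := by
    apply PLinHom.ext
    show (f.t ≫ g.t) ≫ h.t = f.t ≫ g.t ≫ h.t
    simp

end PLinCat

/-! Every structure map of `[D, E]_P` is defined componentwise: the left `N`-action, its unitor
and multiplicator are those of `E` applied to `F d`, and the right `M`-action, its unitor and
multiplicator are `F` applied to those of `D`. Hence all actegory and biactegory coherences hold
componentwise, because they hold in `E` or in `D`; the bimodulator is the identity since
`n • (F ∘ m)` and `(n • F) ∘ m` are the same functor `d ↦ n • F (m • d)` with the same lineator.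
The real content is `P`-linearity. The new lineators and all structure maps are `P`-linear
because the bimodulators `ζ^E` and `ζ^D` are coherent with the right `P`-actions (used in the
form of the coherences of their inverses) and because the lineator of `F` is natural and
multiplicative. The inverse structure maps need no separate argument: the componentwise inverse
of a `P`-linear transformation is again `P`-linear. -/

theorem comp_eq_comp_of_inverses {W X Y Z : C} {f : W ⟶ X} {f' : X ⟶ W} {g : Y ⟶ Z}
    {g' : Z ⟶ Y} {a : W ⟶ Y} {b : X ⟶ Z} (hf : f' ≫ f = 𝟙 X) (hg : g ≫ g' = 𝟙 Y)
    (h : a ≫ g = f ≫ b) : f' ≫ a = b ≫ g' :=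
  calc f' ≫ a = f' ≫ (a ≫ g) ≫ g' := by rw [assoc, hg, comp_id]
    _ = b ≫ g' := by rw [h, assoc, ← assoc f', hf, id_comp]

theorem CategoryTheory.Functor.map_comp_map_eq_id {E : Type*} [Category E] (F : C ⥤ E)
    {X Y : C} {f : X ⟶ Y} {g : Y ⟶ X} (h : f ≫ g = 𝟙 X) : F.map f ≫ F.map g = 𝟙 (F.obj X) := by
  rw [← F.map_comp, h, F.map_id]

namespace IsLeftActegory

variable {A : LeftActegoryData M C} (hA : IsLeftActegory A)
include hA

theorem actHom_id_comp {m : M} {c d e : C} (f : c ⟶ d) (g : d ⟶ e) :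
    A.actHom (𝟙 m) f ≫ A.actHom (𝟙 m) g = A.actHom (𝟙 m) (f ≫ g) := by
  rw [← hA.actHom_comp, comp_id]

theorem actHom_exchange {m m' : M} {c d : C} (g : m ⟶ m') (f : c ⟶ d) :
    A.actHom (𝟙 m) f ≫ A.actHom g (𝟙 d) = A.actHom g (𝟙 c) ≫ A.actHom (𝟙 m') f := by
  rw [← hA.actHom_comp, ← hA.actHom_comp, id_comp, comp_id, comp_id, id_comp]

theorem η'_nat {c d : C} (f : c ⟶ d) : A.actHom (𝟙 (𝟙_ M)) f ≫ A.η' d = A.η' c ≫ f :=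
  (comp_eq_comp_of_inverses (hA.η'_iso c) (hA.η_iso d) (hA.η_nat f)).symm

theorem μ'_nat {m m' n n' : M} {c c' : C} (g : m ⟶ m') (h : n ⟶ n') (f : c ⟶ c') :
    A.actHom (g ⊗ₘ h) f ≫ A.μ' m' n' c' = A.μ' m n c ≫ A.actHom g (A.actHom h f) :=
  (comp_eq_comp_of_inverses (hA.μ'_iso m n c) (hA.μ_iso m' n' c') (hA.μ_nat g h f)).symm

theorem pentagon_inv (m n p : M) (c : C) :
    A.actHom (𝟙 m) (A.μ n p c) ≫ A.μ m (n ⊗ p) c ≫ A.actHom (α_ m n p).inv (𝟙 c)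
      = A.μ m n (A.actObj p c) ≫ A.μ (m ⊗ n) p c := by
  rw [← assoc, ← hA.pentagon, assoc, assoc, ← hA.actHom_comp, Iso.hom_inv_id, comp_id,
    hA.actHom_id, comp_id]

end IsLeftActegory

theorem IsRightActegory.actHom_comp_id {R : RightActegoryData C N} (hR : IsRightActegory R)
    {p : N} {c d e : C} (f : c ⟶ d) (g : d ⟶ e) :
    R.actHom f (𝟙 p) ≫ R.actHom g (𝟙 p) = R.actHom (f ≫ g) (𝟙 p) := by
  rw [← hR.actHom_comp, comp_id]

namespace IsBiactegory

variable {A : LeftActegoryData M C} {R : RightActegoryData C N} {Z : BimodulatorData A R}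
  (hZ : IsBiactegory Z)
include hZ

theorem ζ'_nat {m m' : M} {c c' : C} {n n' : N} (g : m ⟶ m') (f : c ⟶ c') (h : n ⟶ n') :
    R.actHom (A.actHom g f) h ≫ Z.ζ' m' c' n' = Z.ζ' m c n ≫ A.actHom g (R.actHom f h) :=
  (comp_eq_comp_of_inverses (hZ.ζ'_iso m c n) (hZ.ζ_iso m' c' n') (hZ.ζ_nat g f h)).symm

theorem ζ'_pentagon_left (hA : IsLeftActegory A) (m n : M) (c : C) (p : N) :
    R.actHom (A.μ m n c) (𝟙 p) ≫ Z.ζ' (m ⊗ n) c p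
      = Z.ζ' m (A.actObj n c) p ≫ A.actHom (𝟙 m) (Z.ζ' n c p) ≫ A.μ m n (R.actObj c p) := by
  have hinv : (Z.ζ' m (A.actObj n c) p ≫ A.actHom (𝟙 m) (Z.ζ' n c p))
      ≫ A.actHom (𝟙 m) (Z.ζ n c p) ≫ Z.ζ m (A.actObj n c) p = 𝟙 _ := by
    rw [assoc, ← assoc (A.actHom _ _), hA.actHom_id_comp, hZ.ζ'_iso, hA.actHom_id, id_comp,
      hZ.ζ'_iso]
  rw [← assoc]
  exact (comp_eq_comp_of_inverses hinv (hZ.ζ_iso _ c p) (by rw [hZ.pentagon_left, assoc])).symm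

theorem ζ'_pentagon_right (hR : IsRightActegory R) (m : M) (c : C) (p q : N) :
    R.μ (A.actObj m c) p q ≫ Z.ζ' m c (p ⊗ q)
      = R.actHom (Z.ζ' m c p) (𝟙 q) ≫ Z.ζ' m (R.actObj c p) q ≫ A.actHom (𝟙 m) (R.μ c p q) := by
  have hinv : (R.actHom (Z.ζ' m c p) (𝟙 q) ≫ Z.ζ' m (R.actObj c p) q)
      ≫ Z.ζ m (R.actObj c p) q ≫ R.actHom (Z.ζ m c p) (𝟙 q) = 𝟙 _ := by
    rw [assoc, ← assoc (Z.ζ' _ _ _), hZ.ζ'_iso, id_comp, hR.actHom_comp_id, hZ.ζ'_iso,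
      hR.actHom_id]
  rw [← assoc]
  exact (comp_eq_comp_of_inverses hinv (hZ.ζ_iso m c _) (by rw [hZ.pentagon_right, assoc])).symm

theorem ζ'_triangle_unit_left (c : C) (n : N) :
    R.actHom (A.η c) (𝟙 n) ≫ Z.ζ' (𝟙_ M) c n = A.η (R.actObj c n) := by
  rw [← hZ.triangle_unit_left, assoc, hZ.ζ_iso, comp_id]

theorem ζ'_triangle_unit_right (m : M) (c : C) :
    R.η (A.actObj m c) ≫ Z.ζ' m c (𝟙_ N) = A.actHom (𝟙 m) (R.η c) := by
  rw [← hZ.triangle_unit_right, assoc, hZ.ζ_iso, comp_id]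

end IsBiactegory

namespace PLin

variable {RD : RightActegoryData C P} {RE : RightActegoryData D P} {hRE : IsRightActegory RE}

theorem hom_ext {K K' : PLin RD RE hRE} {ξ ξ' : K ⟶ K'} (h : ∀ d, ξ.t.app d = ξ'.t.app d) :
    ξ = ξ' :=
  PLinHom.ext (NatTrans.ext (funext h))

@[simp]
theorem id_t_app (K : PLin RD RE hRE) (d : C) : (𝟙 K : K ⟶ K).t.app d = 𝟙 (K.F.obj d) :=
  rfl

@[simp]
theorem comp_t_app {K K' K'' : PLin RD RE hRE} (ξ : K ⟶ K') (ξ' : K' ⟶ K'') (d : C) :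
    (ξ ≫ ξ').t.app d = ξ.t.app d ≫ ξ'.t.app d :=
  rfl

def homOfInverse {K K' : PLin RD RE hRE} (ξ : K ⟶ K') (ι : ∀ d, K'.F.obj d ⟶ K.F.obj d)
    (hι : ∀ d, ι d ≫ ξ.t.app d = 𝟙 _) (hι' : ∀ d, ξ.t.app d ≫ ι d = 𝟙 _) : K' ⟶ K where
  t :=
    { app := ι
      naturality _ _ f := (comp_eq_comp_of_inverses (hι _) (hι' _) (ξ.t.naturality f)).symm }
  linearity d p := by
    refine comp_eq_comp_of_inverses ?_ (hι' _) (ξ.linearity d p).symm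
    rw [hRE.actHom_comp_id, hι, hRE.actHom_id]

section LeftAction

variable (AE : LeftActegoryData N D) (hAE : IsLeftActegory AE) (ZE : BimodulatorData AE RE)
  (hZE : IsBiactegory ZE)

abbrev leftActObj (n : N) (K : PLin RD RE hRE) : PLin RD RE hRE where
  F :=
    { obj d := AE.actObj n (K.F.obj d)
      map f := AE.actHom (𝟙 n) (K.F.map f)
      map_id d := by rw [K.F.map_id, hAE.actHom_id]
      map_comp f g := by rw [K.F.map_comp, hAE.actHom_id_comp] }
  r d p := ZE.ζ' n (K.F.obj d) p ≫ AE.actHom (𝟙 n) (K.r d p)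
  r' d p := AE.actHom (𝟙 n) (K.r' d p) ≫ ZE.ζ n (K.F.obj d) p
  r_iso d p := by
    rw [assoc, ← assoc (AE.actHom _ _), hAE.actHom_id_comp, K.r_iso, hAE.actHom_id, id_comp,
      hZE.ζ'_iso]
  r'_iso d p := by
    rw [assoc, ← assoc (ZE.ζ _ _ _), hZE.ζ_iso, id_comp, hAE.actHom_id_comp, K.r'_iso,
      hAE.actHom_id]
  r_nat f h := by
    rw [← assoc, hZE.ζ'_nat, assoc, hAE.actHom_id_comp, K.r_nat, ← hAE.actHom_id_comp, ← assoc]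
  r_unit d := by
    rw [← assoc, hZE.ζ'_triangle_unit_right, hAE.actHom_id_comp, K.r_unit]
  r_mult d p q := by
    rw [← assoc, hZE.ζ'_pentagon_right hRE, assoc, assoc, hAE.actHom_id_comp, K.r_mult,
      ← hRE.actHom_comp_id]
    simp only [assoc, reassoc_of% (hZE.ζ'_nat (𝟙 n) (K.r d p) (𝟙 q)), hAE.actHom_id_comp]

@[simps]
def leftActHom {n n' : N} (g : n ⟶ n') {K K' : PLin RD RE hRE} (ξ : K ⟶ K') :
    leftActObj AE hAE ZE hZE n K ⟶ leftActObj AE hAE ZE hZE n' K' where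
  t :=
    { app d := AE.actHom g (ξ.t.app d)
      naturality _ _ f := by
        rw [← hAE.actHom_comp, ← hAE.actHom_comp, id_comp, comp_id, ξ.t.naturality] }
  linearity d p := by
    dsimp only
    rw [← assoc, hZE.ζ'_nat, assoc, ← hAE.actHom_comp, comp_id, ξ.linearity, assoc,
      ← hAE.actHom_comp, id_comp]

@[simps]
def leftActUnitor (K : PLin RD RE hRE) : K ⟶ leftActObj AE hAE ZE hZE (𝟙_ N) K where
  t :=
    { app d := AE.η (K.F.obj d)
      naturality _ _ f := hAE.η_nat (K.F.map f) }
  linearity d p := by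
    rw [← assoc, hZE.ζ'_triangle_unit_left, ← hAE.η_nat]

@[simps]
def leftActMultiplicator (n n' : N) (K : PLin RD RE hRE) :
    leftActObj AE hAE ZE hZE n (leftActObj AE hAE ZE hZE n' K)
      ⟶ leftActObj AE hAE ZE hZE (n ⊗ n') K where
  t :=
    { app d := AE.μ n n' (K.F.obj d)
      naturality _ _ f := by
        simpa only [id_tensorHom_id] using hAE.μ_nat (𝟙 n) (𝟙 n') (K.F.map f) }
  linearity d p := by
    dsimp only
    rw [← assoc, hZE.ζ'_pentagon_left hAE, assoc, assoc, ← id_tensorHom_id, ← hAE.μ_nat,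
      ← hAE.actHom_id_comp, assoc, assoc]

abbrev leftActegoryData : LeftActegoryData N (PLin RD RE hRE) where
  actObj := leftActObj AE hAE ZE hZE
  actHom g ξ := leftActHom AE hAE ZE hZE g ξ
  η := leftActUnitor AE hAE ZE hZE
  η' K := homOfInverse (leftActUnitor AE hAE ZE hZE K) (fun d => AE.η' (K.F.obj d))
    (fun _ => hAE.η'_iso _) (fun _ => hAE.η_iso _)
  μ := leftActMultiplicator AE hAE ZE hZE
  μ' n n' K := homOfInverse (leftActMultiplicator AE hAE ZE hZE n n' K)
    (fun d => AE.μ' n n' (K.F.obj d)) (fun _ => hAE.μ'_iso _ _ _) (fun _ => hAE.μ_iso _ _ _)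

theorem isLeftActegory_leftActegoryData :
    IsLeftActegory (leftActegoryData (RD := RD) (hRE := hRE) AE hAE ZE hZE) where
  actHom_id n K := hom_ext fun d => hAE.actHom_id n (K.F.obj d)
  actHom_comp g g' ξ ξ' := hom_ext fun d => hAE.actHom_comp g g' (ξ.t.app d) (ξ'.t.app d)
  η_iso K := hom_ext fun d => hAE.η_iso (K.F.obj d)
  η'_iso K := hom_ext fun d => hAE.η'_iso (K.F.obj d)
  μ_iso n n' K := hom_ext fun d => hAE.μ_iso n n' (K.F.obj d)
  μ'_iso n n' K := hom_ext fun d => hAE.μ'_iso n n' (K.F.obj d)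
  η_nat ξ := hom_ext fun d => hAE.η_nat (ξ.t.app d)
  μ_nat g h ξ := hom_ext fun d => hAE.μ_nat g h (ξ.t.app d)
  pentagon m n p K := hom_ext fun d => hAE.pentagon m n p (K.F.obj d)
  triangle_left m K := hom_ext fun d => hAE.triangle_left m (K.F.obj d)
  triangle_right m K := hom_ext fun d => hAE.triangle_right m (K.F.obj d)

end LeftAction

section RightAction

variable (AD : LeftActegoryData M C) (hAD : IsLeftActegory AD) (hRD : IsRightActegory RD)
  (ZD : BimodulatorData AD RD) (hZD : IsBiactegory ZD)

abbrev rightActObj (K : PLin RD RE hRE) (m : M) : PLin RD RE hRE where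
  F :=
    { obj d := K.F.obj (AD.actObj m d)
      map f := K.F.map (AD.actHom (𝟙 m) f)
      map_id d := by rw [hAD.actHom_id, K.F.map_id]
      map_comp f g := by rw [← hAD.actHom_id_comp, K.F.map_comp] }
  r d p := K.r (AD.actObj m d) p ≫ K.F.map (ZD.ζ' m d p)
  r' d p := K.F.map (ZD.ζ m d p) ≫ K.r' (AD.actObj m d) p
  r_iso d p := by
    rw [assoc, ← assoc (K.F.map _), K.F.map_comp_map_eq_id (hZD.ζ'_iso m d p), id_comp, K.r_iso]
  r'_iso d p := by
    rw [assoc, ← assoc (K.r' _ p), K.r'_iso, id_comp, K.F.map_comp_map_eq_id (hZD.ζ_iso m d p)]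
  r_nat f h := by
    rw [← assoc, K.r_nat, assoc, ← K.F.map_comp, hZD.ζ'_nat, K.F.map_comp, assoc]
  r_unit d := by
    rw [← assoc, K.r_unit, ← K.F.map_comp, hZD.ζ'_triangle_unit_right]
  r_mult d p q := by
    rw [← assoc, K.r_mult, assoc, assoc, ← K.F.map_comp, hZD.ζ'_pentagon_right hRD,
      ← hRE.actHom_comp_id]
    simp only [assoc, reassoc_of% (K.r_nat (ZD.ζ' m d p) (𝟙 q)), ← K.F.map_comp]

@[simps]
def rightActWhiskerLeft (K : PLin RD RE hRE) {m m' : M} (g : m ⟶ m') :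
    rightActObj AD hAD hRD ZD hZD K m ⟶ rightActObj AD hAD hRD ZD hZD K m' where
  t :=
    { app d := K.F.map (AD.actHom g (𝟙 d))
      naturality _ _ f := by rw [← K.F.map_comp, ← K.F.map_comp, hAD.actHom_exchange] }
  linearity d p := by
    rw [← assoc, K.r_nat, assoc, ← K.F.map_comp, hZD.ζ'_nat, hRD.actHom_id, K.F.map_comp, assoc]

@[simps]
def rightActWhiskerRight {K K' : PLin RD RE hRE} (ξ : K ⟶ K') (m : M) :
    rightActObj AD hAD hRD ZD hZD K m ⟶ rightActObj AD hAD hRD ZD hZD K' m where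
  t :=
    { app d := ξ.t.app (AD.actObj m d)
      naturality _ _ _ := ξ.t.naturality _ }
  linearity d p := by
    rw [← assoc, ξ.linearity, assoc, ← ξ.t.naturality, assoc]

@[simps]
def rightActUnitor (K : PLin RD RE hRE) : K ⟶ rightActObj AD hAD hRD ZD hZD K (𝟙_ M) where
  t :=
    { app d := K.F.map (AD.η d)
      naturality _ _ f := by rw [← K.F.map_comp, ← K.F.map_comp, hAD.η_nat] }
  linearity d p := by
    rw [← assoc, K.r_nat, assoc, ← K.F.map_comp, hZD.ζ'_triangle_unit_left]

@[simps]
def rightActMultiplicator (K : PLin RD RE hRE) (m m' : M) :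
    rightActObj AD hAD hRD ZD hZD (rightActObj AD hAD hRD ZD hZD K m) m'
      ⟶ rightActObj AD hAD hRD ZD hZD K (m ⊗ m') where
  t :=
    { app d := K.F.map (AD.μ m m' d)
      naturality _ _ f := by
        simpa only [← K.F.map_comp, id_tensorHom_id] using
          congrArg K.F.map (hAD.μ_nat (𝟙 m) (𝟙 m') f) }
  linearity d p := by
    rw [← assoc, K.r_nat, assoc, ← K.F.map_comp, hZD.ζ'_pentagon_left hAD, assoc, assoc,
      K.F.map_comp, K.F.map_comp]

abbrev rightActegoryData : RightActegoryData (PLin RD RE hRE) M where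
  actObj := rightActObj AD hAD hRD ZD hZD
  actHom {K _ _ m'} ξ g :=
    rightActWhiskerLeft AD hAD hRD ZD hZD K g ≫ rightActWhiskerRight AD hAD hRD ZD hZD ξ m'
  η := rightActUnitor AD hAD hRD ZD hZD
  η' K := homOfInverse (rightActUnitor AD hAD hRD ZD hZD K) (fun d => K.F.map (AD.η' d))
    (fun _ => K.F.map_comp_map_eq_id (hAD.η'_iso _))
    (fun _ => K.F.map_comp_map_eq_id (hAD.η_iso _))
  μ := rightActMultiplicator AD hAD hRD ZD hZD
  μ' K m m' := homOfInverse (rightActMultiplicator AD hAD hRD ZD hZD K m m')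
    (fun d => K.F.map (AD.μ' m m' d))
    (fun _ => K.F.map_comp_map_eq_id (hAD.μ'_iso _ _ _))
    (fun _ => K.F.map_comp_map_eq_id (hAD.μ_iso _ _ _))

theorem isRightActegory_rightActegoryData :
    IsRightActegory (rightActegoryData (RE := RE) (hRE := hRE) AD hAD hRD ZD hZD) where
  actHom_id _ _ := hom_ext fun _ => by simp [hAD.actHom_id]
  actHom_comp _ _ _ _ := hom_ext fun _ => by simp [← Functor.map_comp, ← hAD.actHom_comp]
  η_iso K := hom_ext fun d => K.F.map_comp_map_eq_id (hAD.η_iso d)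
  η'_iso K := hom_ext fun d => K.F.map_comp_map_eq_id (hAD.η'_iso d)
  μ_iso K m m' := hom_ext fun d => K.F.map_comp_map_eq_id (hAD.μ_iso m m' d)
  μ'_iso K m m' := hom_ext fun d => K.F.map_comp_map_eq_id (hAD.μ'_iso m m' d)
  η_nat _ := hom_ext fun _ => by simp [hAD.actHom_id]
  μ_nat _ _ _ := hom_ext fun _ => by
    simp [← Functor.map_comp, ← reassoc_of% hAD.actHom_comp, hAD.μ_nat]
  pentagon _ _ _ _ := hom_ext fun _ => by
    simp [hAD.actHom_id, ← Functor.map_comp, hAD.pentagon_inv]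
  triangle_left _ _ := hom_ext fun _ => by simp [← Functor.map_comp, hAD.triangle_right]
  triangle_right _ _ := hom_ext fun _ => by
    simp [hAD.actHom_id, ← Functor.map_comp, hAD.triangle_left]

end RightAction

section Bimodulator

variable (AD : LeftActegoryData M C) (hAD : IsLeftActegory AD) (hRD : IsRightActegory RD)
  (ZD : BimodulatorData AD RD) (hZD : IsBiactegory ZD)
  (AE : LeftActegoryData N D) (hAE : IsLeftActegory AE) (ZE : BimodulatorData AE RE)
  (hZE : IsBiactegory ZE)

@[simps]
def bimodulator (n : N) (K : PLin RD RE hRE) (m : M) :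
    leftActObj AE hAE ZE hZE n (rightActObj AD hAD hRD ZD hZD K m)
      ⟶ rightActObj AD hAD hRD ZD hZD (leftActObj AE hAE ZE hZE n K) m where
  t := 𝟙 _
  linearity d p := by simp [hRE.actHom_id, hAE.actHom_id_comp]

abbrev bimodulatorData :
    BimodulatorData (leftActegoryData (RD := RD) (hRE := hRE) AE hAE ZE hZE)
      (rightActegoryData AD hAD hRD ZD hZD) where
  ζ := bimodulator AD hAD hRD ZD hZD AE hAE ZE hZE
  ζ' n K m := homOfInverse (bimodulator AD hAD hRD ZD hZD AE hAE ZE hZE n K m) (fun _ => 𝟙 _)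
    (fun _ => id_comp _) (fun _ => id_comp _)

theorem isBiactegory_bimodulatorData :
    IsBiactegory (bimodulatorData (hRE := hRE) AD hAD hRD ZD hZD AE hAE ZE hZE) where
  ζ_iso _ _ _ := hom_ext fun _ => id_comp _
  ζ'_iso _ _ _ := hom_ext fun _ => id_comp _
  ζ_nat _ _ _ := hom_ext fun _ => by simp [← hAE.actHom_comp]
  pentagon_left _ _ _ _ := hom_ext fun _ => by simp [hAD.actHom_id, hAE.actHom_id]
  pentagon_right _ _ _ _ := hom_ext fun _ => by simp [hAD.actHom_id, hAE.actHom_id]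
  triangle_unit_left _ _ := hom_ext fun _ => by simp [hAD.actHom_id]
  triangle_unit_right _ _ := hom_ext fun _ => by simp

end Bimodulator

end PLin
/-- **Statement 19.** Let `D` be an `(M,P)`-biactegory and `E` an `(N,P)`-biactegory.
Then the category `[D,E]_P` of strong right `P`-linear functors and `P`-linear
transformations is an `(N,M)`-biactegory: the left `N`-action is pointwise
`(n • F) d := n •_E F d` (with lineator built from `(ζ^E)⁻¹` and `r`), the right
`M`-action is `(F • m) d := F (m •_D d)` (with lineator built from `r` and
`F (ζ^D)⁻¹`), the unitors and multiplicators are given pointwise by those of `E`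
and `D` respectively, and the bimodulator is pointwise the identity.  All the right
`P`-linearity conditions, the actegory coherences and the biactegory coherences
hold for these data. -/
theorem internalHom_is_biactegory
    (AD : LeftActegoryData M C) (hAD : IsLeftActegory AD)
    (RD : RightActegoryData C P) (hRD : IsRightActegory RD)
    (ZD : BimodulatorData AD RD) (hZD : IsBiactegory ZD)
    (AE : LeftActegoryData N D) (hAE : IsLeftActegory AE)
    (RE : RightActegoryData D P) (hRE : IsRightActegory RE)
    (ZE : BimodulatorData AE RE) (hZE : IsBiactegory ZE) :
    ∃ (L : LeftActegoryData N (PLin RD RE hRE))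
      (R : RightActegoryData (PLin RD RE hRE) M)
      (Z : BimodulatorData L R),
      -- the left `N`-action is pointwise that of `E`
      (∀ (n : N) (K : PLin RD RE hRE) (d : C),
        (L.actObj n K).F.obj d = AE.actObj n (K.F.obj d)) ∧
      (∀ (n : N) (K : PLin RD RE hRE) (d : C) (p : P),
        HEq ((L.actObj n K).r d p) (ZE.ζ' n (K.F.obj d) p ≫ AE.actHom (𝟙 n) (K.r d p))) ∧
      (∀ (n : N) (K : PLin RD RE hRE) {d d' : C} (f : d ⟶ d'),
        HEq ((L.actObj n K).F.map f) (AE.actHom (𝟙 n) (K.F.map f))) ∧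
      (∀ {n n' : N} (g : n ⟶ n') {K K' : PLin RD RE hRE} (ξ : K ⟶ K') (d : C),
        HEq ((L.actHom g ξ).t.app d) (AE.actHom g (ξ.t.app d))) ∧
      (∀ (K : PLin RD RE hRE) (d : C), HEq ((L.η K).t.app d) (AE.η (K.F.obj d))) ∧
      (∀ (n n' : N) (K : PLin RD RE hRE) (d : C),
        HEq ((L.μ n n' K).t.app d) (AE.μ n n' (K.F.obj d))) ∧
      -- the right `M`-action is pointwise precomposition with that of `D`
      (∀ (K : PLin RD RE hRE) (m : M) (d : C),
        (R.actObj K m).F.obj d = K.F.obj (AD.actObj m d)) ∧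
      (∀ (K : PLin RD RE hRE) (m : M) (d : C) (p : P),
        HEq ((R.actObj K m).r d p) (K.r (AD.actObj m d) p ≫ K.F.map (ZD.ζ' m d p))) ∧
      (∀ (K : PLin RD RE hRE) (m : M) {d d' : C} (f : d ⟶ d'),
        HEq ((R.actObj K m).F.map f) (K.F.map (AD.actHom (𝟙 m) f))) ∧
      (∀ {K K' : PLin RD RE hRE} (ξ : K ⟶ K') {m m' : M} (g : m ⟶ m') (d : C),
        HEq ((R.actHom ξ g).t.app d)
          (K.F.map (AD.actHom g (𝟙 d)) ≫ ξ.t.app (AD.actObj m' d))) ∧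
      (∀ (K : PLin RD RE hRE) (d : C), HEq ((R.η K).t.app d) (K.F.map (AD.η d))) ∧
      (∀ (K : PLin RD RE hRE) (m m' : M) (d : C),
        HEq ((R.μ K m m').t.app d) (K.F.map (AD.μ m m' d))) ∧
      -- the bimodulator is pointwise the identity
      (∀ (n : N) (K : PLin RD RE hRE) (m : M) (d : C),
        HEq ((Z.ζ n K m).t.app d) (𝟙 (AE.actObj n (K.F.obj (AD.actObj m d))))) ∧
      -- all the coherences hold
      IsLeftActegory L ∧ IsRightActegory R ∧ IsBiactegory Z := by
  refine ⟨PLin.leftActegoryData AE hAE ZE hZE, PLin.rightActegoryData AD hAD hRD ZD hZD,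
    PLin.bimodulatorData AD hAD hRD ZD hZD AE hAE ZE hZE,
    ?_, ?_, ?_, ?_, ?_, ?_, ?_, ?_, ?_, ?_, ?_, ?_, ?_,
    PLin.isLeftActegory_leftActegoryData AE hAE ZE hZE,
    PLin.isRightActegory_rightActegoryData AD hAD hRD ZD hZD,
    PLin.isBiactegory_bimodulatorData AD hAD hRD ZD hZD AE hAE ZE hZE⟩ <;>
  intros <;> rfl
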